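/- arXiv:2104.03959 — 2 statements merged into one kernel-verified Lean document; each statement's English description precedes it below -/
import Mathlib

section
/- Let γ ∈ ℝ and let g : 𝔻 \ {0} → ℂ be holomorphic with ∫_𝔻 |z|^γ |g(z)|² dm(z) < ∞. Write γ = 2k + ξ with k ∈ ℤ and ξ ∈ (-2, 0]. Then the function z ↦ z^k g(z) extends holomorphically to 𝔻, and there are constants C > 0 and ε > 0 such that |z|^γ |g(z)|² ≤ C |z|^{ε-2} for all z near 0. -/
/-!
Write `ω(w) = |w|^γ |g(w)|²`. On the disc `B(z, |z|/2)` the weight `|w|^γ` is comparable to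
`|z|^γ`, so the sub-mean-value property of `|g|²` (from the mean value property of `g²` on circles,
integrated in polar coordinates) gives `|z|^(γ+2) |g(z)|² ≲ ∫_{|w| < 3|z|/2} ω(w)`, which tends to
`0` with `z` by integrability of `ω`. As `ξ ≤ 0`, this forces `z · z^k g(z) → 0`, so `z^k g` has a
removable singularity at `0`. If `G` is the holomorphic extension, then
`|z|^γ |g(z)|² = |z|^ξ |G(z)|²` is bounded by a multiple of `|z|^(ε-2)` with `ε = ξ + 2 > 0`.
-/

open MeasureTheory Complex Metric Set

open Real Filter Topology

theorem norm_circleAverage_le {E : Type*} [NormedAddCommGroup E] [NormedSpace ℝ E]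
    (f : ℂ → E) (c : ℂ) (R : ℝ) :
    ‖circleAverage f c R‖ ≤ circleAverage (fun w => ‖f w‖) c R := by
  rw [circleAverage_def, circleAverage_def, norm_smul, smul_eq_mul,
    Real.norm_of_nonneg (by positivity)]
  gcongr
  exact intervalIntegral.norm_integral_le_integral_norm (by positivity)

theorem sq_norm_le_circleAverage {f : ℂ → ℂ} {c : ℂ} {R : ℝ}
    (hf : DiffContOnCl ℂ f (ball c |R|)) :
    ‖f c‖ ^ 2 ≤ circleAverage (fun w => ‖f w‖ ^ 2) c R := by
  have hmean : circleAverage (fun w => f w * f w) c R = f c * f c := (hf.smul hf).circleAverage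
  calc ‖f c‖ ^ 2 = ‖circleAverage (fun w => f w * f w) c R‖ := by rw [hmean, norm_mul, sq]
    _ ≤ circleAverage (fun w => ‖f w‖ ^ 2) c R := by
      simpa only [norm_mul, sq] using norm_circleAverage_le (fun w => f w * f w) c R

theorem circleMap_eq_add_polarCoord_symm (c : ℂ) (p : ℝ × ℝ) :
    circleMap c p.1 p.2 = c + Complex.polarCoord.symm p := by
  rw [circleMap, Complex.polarCoord_symm_apply, Complex.exp_mul_I]
  push_cast
  ring

theorem setIntegral_ball_eq_setIntegral_polar {E : Type*} [NormedAddCommGroup E]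
    [NormedSpace ℝ E] (h : ℂ → E) (c : ℂ) (r : ℝ) :
    ∫ w in ball c r, h w = ∫ p in Ioo 0 r ×ˢ Ioo (-π) π, p.1 • h (circleMap c p.1 p.2) := by
  have hind : ∀ p ∈ polarCoord.target,
      p.1 • (ball c r).indicator h (c + Complex.polarCoord.symm p) =
        (Iio r ×ˢ univ).indicator (fun p : ℝ × ℝ => p.1 • h (circleMap c p.1 p.2)) p := by
    rintro ⟨s, θ⟩ ⟨hs, -⟩
    have hs : 0 < s := hs
    have hmem : c + Complex.polarCoord.symm (s, θ) ∈ ball c r ↔ s < r := by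
      rw [mem_ball, dist_self_add_left, Complex.norm_polarCoord_symm, abs_of_pos hs]
    by_cases hsr : s < r
    · rw [indicator_of_mem (hmem.2 hsr), indicator_of_mem (by simpa using hsr),
        circleMap_eq_add_polarCoord_symm]
    · rw [indicator_of_notMem (mt hmem.1 hsr), indicator_of_notMem (by simpa using hsr),
        smul_zero]
  calc ∫ w in ball c r, h w = ∫ w, (ball c r).indicator h w :=
        (integral_indicator measurableSet_ball).symm
    _ = ∫ w, (ball c r).indicator h (c + w) := (integral_add_left_eq_self _ c).symm
    _ = ∫ p in polarCoord.target, p.1 • (ball c r).indicator h (c + Complex.polarCoord.symm p) :=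
        (Complex.integral_comp_polarCoord_symm _).symm
    _ = ∫ p in polarCoord.target,
          (Iio r ×ˢ univ).indicator (fun p : ℝ × ℝ => p.1 • h (circleMap c p.1 p.2)) p :=
        setIntegral_congr_fun polarCoord.open_target.measurableSet hind
    _ = ∫ p in Ioo 0 r ×ˢ Ioo (-π) π, p.1 • h (circleMap c p.1 p.2) := by
        rw [setIntegral_indicator (measurableSet_Iio.prod MeasurableSet.univ), polarCoord_target,
          prod_inter_prod, Ioi_inter_Iio, inter_univ]

theorem setIntegral_Ioo_circleMap_eq_circleAverage {E : Type*} [NormedAddCommGroup E]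
    [NormedSpace ℝ E] (h : ℂ → E) (c : ℂ) (R : ℝ) :
    ∫ θ in Ioo (-π) π, h (circleMap c R θ) = (2 * π) • circleAverage h c R := by
  rw [circleAverage_eq_integral_add (-π), smul_inv_smul₀ (by positivity),
    intervalIntegral.integral_comp_add_right (fun θ => h (circleMap c R θ)), zero_add,
    show 2 * π + -π = π by ring, intervalIntegral.integral_of_le (by linarith [pi_pos]),
    integral_Ioc_eq_integral_Ioo]

theorem setIntegral_ball_eq_intervalIntegral_circleAverage {E : Type*} [NormedAddCommGroup E]
    [NormedSpace ℝ E] {h : ℂ → E} {c : ℂ} {r : ℝ} (hr : 0 ≤ r)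
    (hh : ContinuousOn h (closedBall c r)) :
    ∫ w in ball c r, h w = ∫ s in 0..r, (2 * π * s) • circleAverage h c s := by
  have hmaps : MapsTo (fun p : ℝ × ℝ => circleMap c p.1 p.2) (Icc 0 r ×ˢ Icc (-π) π)
      (closedBall c r) := by
    rintro ⟨s, θ⟩ ⟨⟨hs, hsr⟩, -⟩
    exact closedBall_subset_closedBall hsr (circleMap_mem_closedBall c hs θ)
  have hint : IntegrableOn (fun p : ℝ × ℝ => p.1 • h (circleMap c p.1 p.2))
      (Ioo 0 r ×ˢ Ioo (-π) π) (volume.prod volume) := by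
    rw [← Measure.volume_eq_prod]
    refine ContinuousOn.integrableOn_compact (isCompact_Icc.prod isCompact_Icc) ?_
      |>.mono_set (prod_mono Ioo_subset_Icc_self Ioo_subset_Icc_self)
    exact continuousOn_fst.smul (hh.comp (by fun_prop) hmaps)
  rw [setIntegral_ball_eq_setIntegral_polar, Measure.volume_eq_prod, setIntegral_prod _ hint,
    intervalIntegral.integral_of_le hr, integral_Ioc_eq_integral_Ioo]
  refine setIntegral_congr_fun measurableSet_Ioo fun s _ => ?_
  rw [integral_smul, setIntegral_Ioo_circleMap_eq_circleAverage, smul_smul, mul_comm s]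

theorem mul_sq_norm_le_setIntegral_ball {f : ℂ → ℂ} {c : ℂ} {r : ℝ} (hr : 0 ≤ r)
    (hf : DifferentiableOn ℂ f (closedBall c r)) :
    π * r ^ 2 * ‖f c‖ ^ 2 ≤ ∫ w in ball c r, ‖f w‖ ^ 2 := by
  have hcont : ContinuousOn (fun w => ‖f w‖ ^ 2) (closedBall c r) := hf.continuousOn.norm.pow 2
  have hshell : {z : ℂ | ‖z - c‖ ∈ Icc 0 r} = closedBall c r := by
    ext z; simp [dist_eq_norm]
  have hconst : π * r ^ 2 * ‖f c‖ ^ 2 = ∫ s in 0..r, (2 * π * s) • ‖f c‖ ^ 2 := by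
    simp only [smul_eq_mul]
    rw [intervalIntegral.integral_mul_const, intervalIntegral.integral_const_mul, integral_id]
    ring
  rw [setIntegral_ball_eq_intervalIntegral_circleAverage hr hcont, hconst]
  refine intervalIntegral.integral_mono_on hr (Continuous.intervalIntegrable (by fun_prop) _ _) ?_
    fun s hs => ?_
  · refine ((continuous_const.mul continuous_id).continuousOn.smul ?_).intervalIntegrable_of_Icc hr
    exact ContinuousOn.circleAverage (hshell ▸ hcont) fun _ hs => hs.1
  · have hfs : DiffContOnCl ℂ f (ball c |s|) :=
      (hf.mono (closedBall_subset_closedBall hs.2)).diffContOnCl_ball (by rw [abs_of_nonneg hs.1])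
    exact smul_le_smul_of_nonneg_left (sq_norm_le_circleAverage hfs) (by nlinarith [pi_pos, hs.1])

theorem rpow_le_two_rpow_abs {t : ℝ} (p : ℝ) (ht₁ : 1 / 2 ≤ t) (ht₂ : t ≤ 2) :
    t ^ p ≤ 2 ^ |p| := by
  rcases le_total 0 p with hp | hp
  · rw [abs_of_nonneg hp]
    exact rpow_le_rpow (by linarith) ht₂ hp
  · calc t ^ p ≤ (1 / 2) ^ p := rpow_le_rpow_of_nonpos (by norm_num) ht₁ hp
      _ = 2 ^ |p| := by
        rw [abs_of_nonpos hp, one_div, inv_rpow zero_le_two, rpow_neg zero_le_two]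

theorem rpow_norm_le_two_rpow_abs_mul {E : Type*} [SeminormedAddCommGroup E] {z w : E}
    (hw : w ∈ ball z (‖z‖ / 2)) (γ : ℝ) : ‖z‖ ^ γ ≤ 2 ^ |γ| * ‖w‖ ^ γ := by
  rw [mem_ball, dist_eq_norm] at hw
  have hzw : ‖z‖ ≤ ‖w - z‖ + ‖w‖ := by
    simpa [norm_sub_rev z w] using norm_sub_le_norm_sub_add_norm_sub z w 0
  have hwz : ‖w‖ ≤ ‖w - z‖ + ‖z‖ := by simpa using norm_sub_le_norm_sub_add_norm_sub w z 0
  have hw0 : 0 < ‖w‖ := by linarith [norm_nonneg (w - z)]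
  calc ‖z‖ ^ γ = (‖z‖ / ‖w‖) ^ γ * ‖w‖ ^ γ := by
        rw [div_rpow (norm_nonneg z) hw0.le, div_mul_cancel₀ _ (rpow_pos_of_pos hw0 γ).ne']
    _ ≤ 2 ^ |γ| * ‖w‖ ^ γ := by
        gcongr
        apply rpow_le_two_rpow_abs
        · rw [le_div_iff₀ hw0]; linarith
        · rw [div_le_iff₀ hw0]; linarith

theorem mul_sq_norm_rpow_le_setIntegral_ball {g : ℂ → ℂ} {z : ℂ} (γ : ℝ)
    (hg : DifferentiableOn ℂ g (closedBall z (‖z‖ / 2)))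
    (hint : IntegrableOn (fun w => ‖w‖ ^ γ * ‖g w‖ ^ 2) (ball z (‖z‖ / 2))) :
    π * ‖z‖ ^ 2 * (‖z‖ ^ γ * ‖g z‖ ^ 2) ≤
      4 * 2 ^ |γ| * ∫ w in ball z (‖z‖ / 2), ‖w‖ ^ γ * ‖g w‖ ^ 2 := by
  have hsq : IntegrableOn (fun w => ‖g w‖ ^ 2) (ball z (‖z‖ / 2)) :=
    ((hg.continuousOn.norm.pow 2).integrableOn_compact (isCompact_closedBall _ _)).mono_set
      ball_subset_closedBall
  calc π * ‖z‖ ^ 2 * (‖z‖ ^ γ * ‖g z‖ ^ 2)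
      = 4 * ‖z‖ ^ γ * (π * (‖z‖ / 2) ^ 2 * ‖g z‖ ^ 2) := by ring
    _ ≤ 4 * ‖z‖ ^ γ * ∫ w in ball z (‖z‖ / 2), ‖g w‖ ^ 2 := by
        gcongr
        exact mul_sq_norm_le_setIntegral_ball (by positivity) hg
    _ = 4 * ∫ w in ball z (‖z‖ / 2), ‖z‖ ^ γ * ‖g w‖ ^ 2 := by
        rw [integral_const_mul, mul_assoc]
    _ ≤ 4 * ∫ w in ball z (‖z‖ / 2), 2 ^ |γ| * (‖w‖ ^ γ * ‖g w‖ ^ 2) := by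
        gcongr 4 * ?_
        refine setIntegral_mono_on (hsq.const_mul _) (hint.const_mul _) measurableSet_ball
          fun w hw => ?_
        rw [← mul_assoc]
        gcongr
        exact rpow_norm_le_two_rpow_abs_mul hw γ
    _ = 4 * 2 ^ |γ| * ∫ w in ball z (‖z‖ / 2), ‖w‖ ^ γ * ‖g w‖ ^ 2 := by
        rw [integral_const_mul, mul_assoc]

theorem tendsto_volume_ball_zero (x : ℂ) :
    Tendsto (fun t : ℝ => volume (ball x t)) (𝓝 0) (𝓝 0) := by
  simp only [Complex.volume_ball]
  have : Continuous fun t : ℝ => ENNReal.ofReal t ^ 2 * (NNReal.pi : ENNReal) :=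
    (ENNReal.continuous_mul_const ENNReal.coe_ne_top).comp
      ((ENNReal.continuous_pow 2).comp ENNReal.continuous_ofReal)
  simpa using this.tendsto 0

theorem tendsto_setIntegral_inter_ball_zero {E : Type*} [NormedAddCommGroup E] [NormedSpace ℝ E]
    {h : ℂ → E} {s : Set ℂ} (hh : IntegrableOn h s) (x : ℂ) :
    Tendsto (fun t : ℝ => ∫ w in s ∩ ball x t, h w) (𝓝 0) (𝓝 0) := by
  have hvol : Tendsto (fun t : ℝ => volume.restrict s (ball x t)) (𝓝 0) (𝓝 0) :=
    tendsto_of_tendsto_of_tendsto_of_le_of_le tendsto_const_nhds (tendsto_volume_ball_zero x)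
      (fun _ => zero_le) (fun _ => Measure.restrict_apply_le _ _)
  simpa [Measure.restrict_restrict measurableSet_ball, inter_comm] using
    hh.tendsto_setIntegral_nhds_zero hvol

theorem exists_differentiableOn_eqOn_of_tendsto_sub_smul {E : Type*} [NormedAddCommGroup E]
    [NormedSpace ℂ E] [CompleteSpace E] {f : ℂ → E} {s : Set ℂ} {c : ℂ} (hs : s ∈ 𝓝 c)
    (hf : DifferentiableOn ℂ f (s \ {c})) (hlim : Tendsto (fun z => (z - c) • f z) (𝓝 c) (𝓝 0)) :
    ∃ G : ℂ → E, DifferentiableOn ℂ G s ∧ EqOn G f (s \ {c}) := by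
  -- `F` is continuous at `c`, hence holomorphic on `s`, and its slope at `c` recovers `f`.
  set F : ℂ → E := fun z => (z - c) • f z
  have hF : DifferentiableOn ℂ F s := by
    refine (differentiableOn_compl_singleton_and_continuousAt_iff hs).1 ⟨?_, ?_⟩
    · exact (differentiableOn_id.sub_const c).smul hf
    · simpa [ContinuousAt, F] using hlim
  refine ⟨dslope F c, (differentiableOn_dslope hs).2 hF, fun z hz => ?_⟩
  have hzc : z - c ≠ 0 := sub_ne_zero.2 hz.2
  simp [dslope_of_ne _ hz.2, slope_def_module, F, inv_smul_smul₀ hzc]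

theorem rpow_mul_sq_norm_eq {z : ℂ} (hz : z ≠ 0) (k : ℤ) (ξ : ℝ) (x : ℂ) :
    ‖z‖ ^ (2 * k + ξ) * ‖x‖ ^ 2 = ‖z‖ ^ ξ * ‖z ^ k * x‖ ^ 2 := by
  have hz' : 0 < ‖z‖ := norm_pos_iff.2 hz
  have hk : ‖z‖ ^ (2 * (k : ℝ)) = (‖z‖ ^ k) ^ 2 := by
    rw [← rpow_intCast, ← rpow_natCast, ← rpow_mul hz'.le]
    push_cast
    ring_nf
  rw [rpow_add hz', hk, norm_mul, norm_zpow]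
  ring

theorem sq_norm_mul_zpow_mul_le_setIntegral {γ ξ : ℝ} {k : ℤ} {g : ℂ → ℂ}
    (hγ : γ = 2 * k + ξ) (hξ : ξ ≤ 0) (hg : DifferentiableOn ℂ g (ball (0 : ℂ) 1 \ {0}))
    (hL2 : IntegrableOn (fun z => ‖z‖ ^ γ * ‖g z‖ ^ 2) (ball (0 : ℂ) 1 \ {0}))
    {z : ℂ} (hz : ‖z‖ < 2 / 3) :
    ‖z * (z ^ k * g z)‖ ^ 2 ≤ 4 * 2 ^ |γ| / π *
      ∫ w in (ball (0 : ℂ) 1 \ {0}) ∩ ball 0 (3 / 2 * ‖z‖), ‖w‖ ^ γ * ‖g w‖ ^ 2 := by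
  rcases eq_or_ne z 0 with rfl | hz0
  · simp
  have ha : 0 < ‖z‖ := norm_pos_iff.2 hz0
  have hsub : closedBall z (‖z‖ / 2) ⊆ ball (0 : ℂ) 1 \ {0} := fun w hw =>
    ⟨closedBall_subset_ball' (by rw [dist_zero_right]; linarith) hw, fun h0 => by
      rw [mem_singleton_iff.1 h0, mem_closedBall, dist_zero_left] at hw; linarith⟩
  have hsub' : ball z (‖z‖ / 2) ⊆ (ball (0 : ℂ) 1 \ {0}) ∩ ball 0 (3 / 2 * ‖z‖) :=
    subset_inter (ball_subset_closedBall.trans hsub)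
      (ball_subset_ball' (by rw [dist_zero_right]; linarith))
  have hmean := mul_sq_norm_rpow_le_setIntegral_ball γ (hg.mono hsub)
    (hL2.mono_set (ball_subset_closedBall.trans hsub))
  have hmono : ∫ w in ball z (‖z‖ / 2), ‖w‖ ^ γ * ‖g w‖ ^ 2 ≤
      ∫ w in (ball (0 : ℂ) 1 \ {0}) ∩ ball 0 (3 / 2 * ‖z‖), ‖w‖ ^ γ * ‖g w‖ ^ 2 :=
    setIntegral_mono_set (hL2.mono_set inter_subset_left)
      (Eventually.of_forall fun w => by positivity) hsub'.eventuallyLE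
  have hξ' : 1 ≤ ‖z‖ ^ ξ := one_le_rpow_of_pos_of_le_one_of_nonpos ha (by linarith) hξ
  calc ‖z * (z ^ k * g z)‖ ^ 2 = ‖z‖ ^ 2 * ‖z ^ k * g z‖ ^ 2 := by rw [norm_mul, mul_pow]
    _ ≤ ‖z‖ ^ 2 * (‖z‖ ^ ξ * ‖z ^ k * g z‖ ^ 2) := by
        gcongr
        exact le_mul_of_one_le_left (by positivity) hξ'
    _ = ‖z‖ ^ 2 * (‖z‖ ^ γ * ‖g z‖ ^ 2) := by rw [hγ, rpow_mul_sq_norm_eq hz0]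
    _ ≤ 4 * 2 ^ |γ| / π * ∫ w in ball z (‖z‖ / 2), ‖w‖ ^ γ * ‖g w‖ ^ 2 := by
        rw [div_mul_eq_mul_div, le_div_iff₀ pi_pos]
        linarith
    _ ≤ _ := by gcongr

/-- if `g` is holomorphic on the punctured unit disk with
`∫_𝔻 |z|^γ |g(z)|² dm(z) < ∞`, and `γ = 2k + ξ` with `k ∈ ℤ`, `ξ ∈ (-2, 0]`, then
`z ↦ z^k g(z)` extends holomorphically to `𝔻`, and `|z|^γ |g(z)|² ≤ C |z|^{ε-2}` near `0`. -/
theorem statement4 (γ : ℝ) (g : ℂ → ℂ)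
    (hg : DifferentiableOn ℂ g (ball (0 : ℂ) 1 \ {0}))
    (hL2 : IntegrableOn (fun z => (‖z‖) ^ γ * ‖g z‖ ^ 2) (ball (0 : ℂ) 1 \ {0}))
    (k : ℤ) (ξ : ℝ) (hγ : γ = 2 * k + ξ) (hξ : ξ ∈ Set.Ioc (-2 : ℝ) 0) :
    (∃ G : ℂ → ℂ, DifferentiableOn ℂ G (ball (0 : ℂ) 1) ∧
      ∀ z ∈ ball (0 : ℂ) 1 \ {0}, G z = z ^ k * g z) ∧
    ∃ C > (0 : ℝ), ∃ ε > (0 : ℝ), ∃ δ > (0 : ℝ), ∀ z : ℂ, z ≠ 0 → ‖z‖ < δ →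
      (‖z‖) ^ γ * ‖g z‖ ^ 2 ≤ C * (‖z‖) ^ (ε - 2) := by
  obtain ⟨hξ₁, hξ₂⟩ := hξ
  have hI : Tendsto (fun z : ℂ => ∫ w in (ball (0 : ℂ) 1 \ {0}) ∩ ball 0 (3 / 2 * ‖z‖),
      ‖w‖ ^ γ * ‖g w‖ ^ 2) (𝓝 0) (𝓝 0) :=
    (tendsto_setIntegral_inter_ball_zero hL2 0).comp
      (by simpa using (continuous_norm.const_mul (3 / 2 : ℝ)).tendsto (0 : ℂ))
  have hlim : Tendsto (fun z : ℂ => (z - 0) • (z ^ k * g z)) (𝓝 0) (𝓝 0) := by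
    refine squeeze_zero_norm' ?_ (by simpa using ((hI.const_mul (4 * 2 ^ |γ| / π)).sqrt))
    filter_upwards [ball_mem_nhds (0 : ℂ) (by norm_num : (0 : ℝ) < 2 / 3)] with z hz
    rw [sub_zero, smul_eq_mul]
    exact le_sqrt_of_sq_le (sq_norm_mul_zpow_mul_le_setIntegral hγ hξ₂ hg hL2 (by simpa using hz))
  obtain ⟨G, hGd, hGeq⟩ := exists_differentiableOn_eqOn_of_tendsto_sub_smul
    (f := fun z => z ^ k * g z) (ball_mem_nhds 0 one_pos)
    ((differentiableOn_id.zpow (Or.inl fun z hz => hz.2)).mul hg) hlim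
  refine ⟨⟨G, hGd, hGeq⟩, ?_⟩
  have hbdd : ∀ᶠ z in 𝓝 0, ‖G z‖ < ‖G 0‖ + 1 :=
    (hGd.continuousOn.continuousAt (ball_mem_nhds 0 one_pos)).norm.eventually
      (gt_mem_nhds (lt_add_one _))
  obtain ⟨δ, hδ, hδG⟩ := Metric.eventually_nhds_iff_ball.1 hbdd
  refine ⟨(‖G 0‖ + 1) ^ 2, by positivity, ξ + 2, by linarith, min δ 1, lt_min hδ one_pos,
    fun z hz0 hzδ => ?_⟩
  have hz : z ∈ ball (0 : ℂ) δ ∩ ball 0 1 := by simpa [lt_min_iff] using hzδ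
  calc ‖z‖ ^ γ * ‖g z‖ ^ 2 = ‖z‖ ^ ξ * ‖G z‖ ^ 2 := by
        rw [hγ, rpow_mul_sq_norm_eq hz0, hGeq ⟨hz.2, hz0⟩]
    _ ≤ ‖z‖ ^ ξ * (‖G 0‖ + 1) ^ 2 := by gcongr; exact (hδG z hz.1).le
    _ = (‖G 0‖ + 1) ^ 2 * ‖z‖ ^ (ξ + 2 - 2) := by rw [add_sub_cancel_right, mul_comm]
end

section
/- Let μ be an atomless locally finite positive measure on ℂ with ∫ |x|^{2(N-1)} dμ(x) < ∞, and let (p₁,...,p_N) be an orthonormal basis of ℂ_{N-1}[z] ⊆ L²(ℂ, μ). Set K(z,w) = Σ_{k=1}^N p_k(z) conj(p_k(w)). Then the Vandermonde density ∏_{i<j} |x_i - x_j|² is proportional to det(K(x_i,x_j))_{1≤i,j≤N} as functions on ℂ^N, and the measure dγ = ∏_{i<j}|x_i-x_j|² dμ^{⊗N} is finite. -/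
/-!
Writing `M(x) = (p_k(x_i))_{i,k}`, the kernel matrix is `M(x) M(x)ᴴ`, and `M(x)` is the Vandermonde
matrix of `x` times the transposed coefficient matrix `A` of the `p_k`. Since every monomial `X^j`
with `j < N` is a combination of the `p_k`, `A` is invertible, so `det K = |det A|² |det V(x)|²`.
For integrability, each term of the Leibniz expansion of `det K` is bounded, via Cauchy–Schwarz
`|K(z,w)|² ≤ K(z,z) K(w,w)`, by `∏ᵢ K(xᵢ,xᵢ)`, a product of integrable functions of single
coordinates (orthonormality makes every `|p_k|²` integrable).
-/

open MeasureTheory Complex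

open Polynomial ComplexConjugate Matrix

section CoeffMatrix

variable {R : Type*} [CommRing R] {n : ℕ}

def coeffMatrix (p : Fin n → R[X]) : Matrix (Fin n) (Fin n) R :=
  of fun k j => (p k).coeff j

theorem evalMatrix_eq_vandermonde_mul {p : Fin n → R[X]} (hdeg : ∀ k, (p k).degree < n)
    (x : Fin n → R) :
    (of fun i k => (p k).eval (x i)) = vandermonde x * (coeffMatrix p)ᵀ := by
  ext i k
  have hk : (p k).natDegree < n := by
    by_cases h : p k = 0
    · simpa [h] using k.pos
    · exact (natDegree_lt_iff_degree_lt h).mpr (hdeg k)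
  rw [of_apply, eval_eq_sum_range' hk, ← Fin.sum_univ_eq_sum_range, mul_apply]
  exact Finset.sum_congr rfl fun j _ => mul_comm _ _

theorem isUnit_det_coeffMatrix {p : Fin n → R[X]}
    (hspan : ∀ j : Fin n, ∃ c : Fin n → R, X ^ (j : ℕ) = ∑ k, C (c k) * p k) :
    IsUnit (coeffMatrix p).det := by
  choose c hc using hspan
  refine isUnit_det_of_left_inverse (B := of c) ?_
  ext j m
  have := congrArg (coeff · m) (hc j)
  simpa [coeffMatrix, mul_apply, one_apply, coeff_X_pow, finsetSum_coeff,
    Fin.val_inj, eq_comm] using this.symm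

end CoeffMatrix

theorem Matrix.det_mul_conjTranspose_self {ι : Type*} [Fintype ι] [DecidableEq ι]
    (A : Matrix ι ι ℂ) : (A * Aᴴ).det = ((‖A.det‖ ^ 2 : ℝ) : ℂ) := by
  rw [det_mul, det_conjTranspose, Complex.star_def, Complex.mul_conj, Complex.sq_norm]

theorem det_polynomialKernel {n : ℕ} {p : Fin n → ℂ[X]} (hdeg : ∀ k, (p k).degree < n)
    (x : Fin n → ℂ) :
    (of fun i j => ∑ k, (p k).eval (x i) * conj ((p k).eval (x j))).det
      = ((‖(coeffMatrix p).det‖ ^ 2 : ℝ) : ℂ) *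
          ∏ i, ∏ j ∈ Finset.Ioi i, ((‖x i - x j‖ : ℝ) : ℂ) ^ 2 := by
  set M : Matrix (Fin n) (Fin n) ℂ := of fun i k => (p k).eval (x i) with hM
  have hgram : (of fun i j => ∑ k, (p k).eval (x i) * conj ((p k).eval (x j))) = M * Mᴴ := rfl
  have hnorm : ‖M.det‖ = ‖(coeffMatrix p).det‖ * ∏ i, ∏ j ∈ Finset.Ioi i, ‖x i - x j‖ := by
    rw [hM, evalMatrix_eq_vandermonde_mul hdeg, det_mul, det_transpose, det_vandermonde,
      norm_mul, mul_comm, norm_prod]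
    refine congrArg _ (Finset.prod_congr rfl fun i _ => ?_)
    rw [norm_prod]
    exact Finset.prod_congr rfl fun j _ => norm_sub_rev _ _
  rw [hgram, Matrix.det_mul_conjTranspose_self, hnorm]
  push_cast
  simp_rw [mul_pow, Finset.prod_pow]

section Kernel

variable {α ι : Type*} [Fintype ι] (φ : ι → α → ℂ)

theorem norm_sum_mul_conj_le (z w : α) :
    ‖∑ k, φ k z * conj (φ k w)‖ ≤ √(∑ k, ‖φ k z‖ ^ 2) * √(∑ k, ‖φ k w‖ ^ 2) :=
  calc ‖∑ k, φ k z * conj (φ k w)‖ ≤ ∑ k, ‖φ k z‖ * ‖φ k w‖ := by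
        simpa only [norm_mul, Complex.norm_conj] using
          norm_sum_le Finset.univ fun k => φ k z * conj (φ k w)
    _ ≤ _ := Real.sum_mul_le_sqrt_mul_sqrt _ _ _

theorem prod_norm_kernel_perm_le {n : ℕ} (σ : Equiv.Perm (Fin n)) (x : Fin n → α) :
    ∏ i, ‖∑ k, φ k (x (σ i)) * conj (φ k (x i))‖ ≤ ∏ i, ∑ k, ‖φ k (x i)‖ ^ 2 :=
  calc ∏ i, ‖∑ k, φ k (x (σ i)) * conj (φ k (x i))‖
      ≤ ∏ i, (√(∑ k, ‖φ k (x (σ i))‖ ^ 2) * √(∑ k, ‖φ k (x i)‖ ^ 2)) :=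
        Finset.prod_le_prod (fun _ _ => norm_nonneg _) fun _ _ => norm_sum_mul_conj_le φ _ _
    _ = ∏ i, (√(∑ k, ‖φ k (x i)‖ ^ 2) * √(∑ k, ‖φ k (x i)‖ ^ 2)) := by
        rw [Finset.prod_mul_distrib, Finset.prod_mul_distrib,
          Equiv.prod_comp σ fun i => √(∑ k, ‖φ k (x i)‖ ^ 2)]
    _ = ∏ i, ∑ k, ‖φ k (x i)‖ ^ 2 := by
        simp_rw [Real.mul_self_sqrt (Finset.sum_nonneg fun _ _ => sq_nonneg _)]

theorem integrable_det_kernel [MeasurableSpace α] (μ : Measure α) [SigmaFinite μ]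
    (hφ : ∀ k, Measurable (φ k)) (hφ_sq : ∀ k, Integrable (fun z => ‖φ k z‖ ^ 2) μ) (n : ℕ) :
    Integrable (fun x : Fin n → α => (of fun i j => ∑ k, φ k (x i) * conj (φ k (x j))).det)
      (Measure.pi fun _ => μ) := by
  have hdom :
      Integrable (fun x : Fin n → α => ∏ i, ∑ k, ‖φ k (x i)‖ ^ 2) (Measure.pi fun _ => μ) :=
    Integrable.fintype_prod fun _ => integrable_finsetSum _ fun k _ => hφ_sq k
  simp only [det_apply, of_apply, Units.smul_def, zsmul_eq_mul]
  refine integrable_finsetSum _ fun σ _ => Integrable.const_mul ?_ _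
  have hmeas : Measurable fun x : Fin n → α => ∏ i, ∑ k, φ k (x (σ i)) * conj (φ k (x i)) := by
    fun_prop
  refine hdom.mono' hmeas.aestronglyMeasurable (ae_of_all _ fun x => ?_)
  rw [norm_prod]
  exact prod_norm_kernel_perm_le φ σ x

theorem integrable_norm_sq_of_integral_mul_conj_ne_zero [MeasurableSpace α] {μ : Measure α}
    {f : α → ℂ} (h : ∫ z, f z * conj (f z) ∂μ ≠ 0) : Integrable (fun z => ‖f z‖ ^ 2) μ := by
  have := (Integrable.of_integral_ne_zero h).norm
  simpa only [norm_mul, Complex.norm_conj, sq] using this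

end Kernel

theorem statement13_general (μ : Measure ℂ) [IsLocallyFiniteMeasure μ]
    (N : ℕ)
    (p : Fin N → Polynomial ℂ)
    (hdeg : ∀ k, (p k).degree < N)
    (horth : ∀ k m : Fin N,
      (∫ x, (p k).eval x * (starRingEnd ℂ) ((p m).eval x) ∂μ) = if k = m then 1 else 0)
    (hspan : ∀ q : Polynomial ℂ, q.degree < N →
      ∃ c : Fin N → ℂ, q = ∑ k : Fin N, Polynomial.C (c k) * p k)
    (K : ℂ → ℂ → ℂ)
    (hK : ∀ z w : ℂ, K z w = ∑ k : Fin N, (p k).eval z * (starRingEnd ℂ) ((p k).eval w)) :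
    (∃ c : ℝ, 0 < c ∧ ∀ x : Fin N → ℂ,
      Matrix.det (Matrix.of fun i j => K (x i) (x j))
        = (c : ℂ) * ∏ i : Fin N, ∏ j ∈ Finset.Ioi i,
            ((‖x i - x j‖ : ℝ) : ℂ) ^ 2) ∧
    Integrable (fun x : Fin N → ℂ =>
        ∏ i : Fin N, ∏ j ∈ Finset.Ioi i, ‖x i - x j‖ ^ 2)
      (Measure.pi fun _ : Fin N => μ) := by
  set c := ‖(coeffMatrix p).det‖ ^ 2
  have hc : 0 < c := by
    have hunit := isUnit_det_coeffMatrix fun j : Fin N =>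
      hspan (X ^ (j : ℕ)) (by rw [degree_X_pow]; exact_mod_cast j.isLt)
    exact pow_pos (norm_pos_iff.mpr hunit.ne_zero) 2
  simp_rw [hK]
  refine ⟨⟨c, hc, det_polynomialKernel hdeg⟩, ?_⟩
  have hint := integrable_det_kernel (fun k z => (p k).eval z) μ
    (fun k => (p k).continuous.measurable)
    (fun k => integrable_norm_sq_of_integral_mul_conj_ne_zero (by simp [horth])) N
  refine (hint.re.const_mul c⁻¹).congr (ae_of_all _ fun x => ?_)
  simp only [det_polynomialKernel hdeg x]
  norm_cast
  rw [RCLike.re_to_complex, Complex.ofReal_re, ← mul_assoc, inv_mul_cancel₀ hc.ne', one_mul]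

/-- for an atomless locally finite measure `μ` with finite moment of order
`2(N-1)` and an orthonormal basis `(p_k)` of `ℂ_{N-1}[z] ⊆ L²(ℂ,μ)`, the Vandermonde density
`∏_{i<j} |x_i - x_j|²` is proportional (with positive constant) to
`det(K(x_i,x_j))_{i,j ≤ N}` where `K(z,w) = Σ_k p_k(z) conj(p_k(w))`, and the measure
`∏_{i<j}|x_i-x_j|² dμ^{⊗N}` is finite. -/
theorem statement13 (μ : Measure ℂ) [NullSingletonClass μ] [IsLocallyFiniteMeasure μ]
    (N : ℕ) (hN : 0 < N)
    (hmom : Integrable (fun x : ℂ => ‖x‖ ^ (2 * (N - 1))) μ)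
    (p : Fin N → Polynomial ℂ)
    (hdeg : ∀ k, (p k).degree < N)
    (horth : ∀ k m : Fin N,
      (∫ x, (p k).eval x * (starRingEnd ℂ) ((p m).eval x) ∂μ) = if k = m then 1 else 0)
    (hspan : ∀ q : Polynomial ℂ, q.degree < N →
      ∃ c : Fin N → ℂ, q = ∑ k : Fin N, Polynomial.C (c k) * p k)
    (K : ℂ → ℂ → ℂ)
    (hK : ∀ z w : ℂ, K z w = ∑ k : Fin N, (p k).eval z * (starRingEnd ℂ) ((p k).eval w)) :
    (∃ c : ℝ, 0 < c ∧ ∀ x : Fin N → ℂ,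
      Matrix.det (Matrix.of fun i j => K (x i) (x j))
        = (c : ℂ) * ∏ i : Fin N, ∏ j ∈ Finset.Ioi i,
            ((‖x i - x j‖ : ℝ) : ℂ) ^ 2) ∧
    Integrable (fun x : Fin N → ℂ =>
        ∏ i : Fin N, ∏ j ∈ Finset.Ioi i, ‖x i - x j‖ ^ 2)
      (Measure.pi fun _ : Fin N => μ) :=
  statement13_general μ N p hdeg horth hspan K hK
end
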